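/- Let R_1, …, R_m be a rectangular floorplan of the rectangle [A,B] × [C,D] and let S_1, …, S_k be a rectangular floorplan of the rectangle [A,B] × [D,E] (where A < B and C < D < E). If no point of the segment [A,B] × {D} belongs simultaneously to two of the rectangles R_1, …, R_m and to two of the rectangles S_1, …, S_k, then the combined family R_1, …, R_m, S_1, …, S_k is a rectangular floorplan of the rectangle [A,B] × [C,E]. -/
import Mathlib


open Set

/-- The closed axis-aligned rectangle `[a,b] × [c,d]` in the plane. -/
def Rect (a b c d : ℝ) : Set (ℝ × ℝ) := Set.Icc a b ×ˢ Set.Icc c d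

/-- `IsRFP A B C D a b c d` says that the family of rectangles
`[a k, b k] × [c k, d k]` is a rectangular floorplan of `[A,B] × [C,D]`:
each member is a nondegenerate rectangle, their union is the big rectangle,
their (open) interiors are pairwise disjoint, and no point lies in four of them. -/
def IsRFP {ι : Type*} [Fintype ι] (A B C D : ℝ) (a b c d : ι → ℝ) : Prop :=
  A < B ∧ C < D ∧
  (∀ k, a k < b k ∧ c k < d k) ∧
  (⋃ k, Rect (a k) (b k) (c k) (d k)) = Rect A B C D ∧
  ((Set.univ : Set ι).Pairwise fun i j =>
    Disjoint (Set.Ioo (a i) (b i) ×ˢ Set.Ioo (c i) (d i))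
             (Set.Ioo (a j) (b j) ×ˢ Set.Ioo (c j) (d j))) ∧
  (∀ p : ℝ × ℝ, {k : ι | p ∈ Rect (a k) (b k) (c k) (d k)}.ncard ≤ 3)

lemma mem_Rect {a b c d : ℝ} {p : ℝ × ℝ} :
    p ∈ Rect a b c d ↔ (a ≤ p.1 ∧ p.1 ≤ b) ∧ (c ≤ p.2 ∧ p.2 ≤ d) := by
  rw [Rect, Set.mem_prod, Set.mem_Icc, Set.mem_Icc]

/-- Two disjoint-interior intervals both containing `x`: one ends at `x`,
the other starts at `x`. -/
lemma interval_pair {a1 b1 a2 b2 x : ℝ} (h1 : a1 < b1) (h2 : a2 < b2)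
    (hx1 : a1 ≤ x) (hx1' : x ≤ b1) (hx2 : a2 ≤ x) (hx2' : x ≤ b2)
    (hd : Disjoint (Ioo a1 b1) (Ioo a2 b2)) :
    (b1 = x ∧ a2 = x) ∨ (b2 = x ∧ a1 = x) := by
  rw [Set.Ioo_disjoint_Ioo] at hd
  rcases min_le_iff.mp hd with h | h <;> rcases le_max_iff.mp h with h' | h'
  · linarith
  · left; constructor <;> linarith
  · right; constructor <;> linarith
  · linarith

/-- At most two intervals with pairwise disjoint interiors can contain a point. -/
lemma ncard_le_two_of_intervals {ι : Type*} [Finite ι] (a b : ι → ℝ) (x : ℝ)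
    (S : Set ι) (hab : ∀ i ∈ S, a i < b i)
    (hx : ∀ i ∈ S, a i ≤ x ∧ x ≤ b i)
    (hd : ∀ i ∈ S, ∀ j ∈ S, i ≠ j → Disjoint (Ioo (a i) (b i)) (Ioo (a j) (b j))) :
    S.ncard ≤ 2 := by
  by_contra h
  push_neg at h
  rw [Set.two_lt_ncard S.toFinite] at h
  obtain ⟨i, hi, j, hj, l, hl, hij, hil, hjl⟩ := h
  have p12 := interval_pair (hab i hi) (hab j hj) (hx i hi).1 (hx i hi).2
    (hx j hj).1 (hx j hj).2 (hd i hi j hj hij)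
  have p13 := interval_pair (hab i hi) (hab l hl) (hx i hi).1 (hx i hi).2
    (hx l hl).1 (hx l hl).2 (hd i hi l hl hil)
  have p23 := interval_pair (hab j hj) (hab l hl) (hx j hj).1 (hx j hj).2
    (hx l hl).1 (hx l hl).2 (hd j hj l hl hjl)
  have hi' := hab i hi; have hj' := hab j hj; have hl' := hab l hl
  rcases p12 with ⟨e1, e2⟩ | ⟨e1, e2⟩ <;> rcases p13 with ⟨f1, f2⟩ | ⟨f1, f2⟩ <;>
    rcases p23 with ⟨g1, g2⟩ | ⟨g1, g2⟩ <;> linarith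

/-- The adjacency graph of a family of rectangles: `i ~ j` iff `i ≠ j` and
the intersection of the two rectangles contains more than one point. -/
def adjGraph {ι : Type*} (a b c d : ι → ℝ) : SimpleGraph ι :=
  SimpleGraph.fromRel fun i j =>
    (Rect (a i) (b i) (c i) (d i) ∩ Rect (a j) (b j) (c j) (d j)).Nontrivial

/-- Two rectangular floorplans of `[A,B] × [C,D]` and `[A,B] × [D,E]`, such
that no point of the common segment `[A,B] × {D}` belongs to two rectangles of
the lower floorplan and simultaneously to two rectangles of the upper one,
merge into a rectangular floorplan of `[A,B] × [C,E]`. -/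
theorem stmt_11 {m k : ℕ} (A B C D E : ℝ) (hAB : A < B) (hCD : C < D) (hDE : D < E)
    (aR bR cR dR : Fin m → ℝ) (aS bS cS dS : Fin k → ℝ)
    (hR : IsRFP A B C D aR bR cR dR)
    (hS : IsRFP A B D E aS bS cS dS)
    (hseg : ∀ p : ℝ × ℝ, p ∈ Set.Icc A B ×ˢ ({D} : Set ℝ) →
      ¬ ((∃ i j : Fin m, i ≠ j ∧ p ∈ Rect (aR i) (bR i) (cR i) (dR i) ∧
            p ∈ Rect (aR j) (bR j) (cR j) (dR j)) ∧
         (∃ i j : Fin k, i ≠ j ∧ p ∈ Rect (aS i) (bS i) (cS i) (dS i) ∧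
            p ∈ Rect (aS j) (bS j) (cS j) (dS j)))) :
    IsRFP A B C E (Sum.elim aR aS) (Sum.elim bR bS) (Sum.elim cR cS) (Sum.elim dR dS) := by
  obtain ⟨-, -, hndR, hUR, hdR, hcR⟩ := hR
  obtain ⟨-, -, hndS, hUS, hdS, hcS⟩ := hS
  have hsubR : ∀ i, Rect (aR i) (bR i) (cR i) (dR i) ⊆ Rect A B C D := by
    intro i; rw [← hUR]; exact Set.subset_iUnion (fun j => Rect (aR j) (bR j) (cR j) (dR j)) i
  have hsubS : ∀ i, Rect (aS i) (bS i) (cS i) (dS i) ⊆ Rect A B D E := by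
    intro i; rw [← hUS]; exact Set.subset_iUnion (fun j => Rect (aS j) (bS j) (cS j) (dS j)) i
  have hbR : ∀ i, A ≤ aR i ∧ bR i ≤ B ∧ C ≤ cR i ∧ dR i ≤ D := by
    intro i
    have h1 : ((aR i, cR i) : ℝ × ℝ) ∈ Rect (aR i) (bR i) (cR i) (dR i) :=
      mem_Rect.mpr ⟨⟨le_rfl, (hndR i).1.le⟩, le_rfl, (hndR i).2.le⟩
    have h2 : ((bR i, dR i) : ℝ × ℝ) ∈ Rect (aR i) (bR i) (cR i) (dR i) :=
      mem_Rect.mpr ⟨⟨(hndR i).1.le, le_rfl⟩, (hndR i).2.le, le_rfl⟩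
    have g1 := mem_Rect.mp (hsubR i h1)
    have g2 := mem_Rect.mp (hsubR i h2)
    exact ⟨g1.1.1, g2.1.2, g1.2.1, g2.2.2⟩
  have hbS : ∀ i, A ≤ aS i ∧ bS i ≤ B ∧ D ≤ cS i ∧ dS i ≤ E := by
    intro i
    have h1 : ((aS i, cS i) : ℝ × ℝ) ∈ Rect (aS i) (bS i) (cS i) (dS i) :=
      mem_Rect.mpr ⟨⟨le_rfl, (hndS i).1.le⟩, le_rfl, (hndS i).2.le⟩
    have h2 : ((bS i, dS i) : ℝ × ℝ) ∈ Rect (aS i) (bS i) (cS i) (dS i) :=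
      mem_Rect.mpr ⟨⟨(hndS i).1.le, le_rfl⟩, (hndS i).2.le, le_rfl⟩
    have g1 := mem_Rect.mp (hsubS i h1)
    have g2 := mem_Rect.mp (hsubS i h2)
    exact ⟨g1.1.1, g2.1.2, g1.2.1, g2.2.2⟩
  refine ⟨hAB, hCD.trans hDE, ?_, ?_, ?_, ?_⟩
  · rintro (i | i)
    · exact hndR i
    · exact hndS i
  · rw [Set.iUnion_sum]
    simp only [Sum.elim_inl, Sum.elim_inr]
    rw [hUR, hUS, Rect, Rect, Rect, ← Set.prod_union,
      Set.Icc_union_Icc_eq_Icc hCD.le hDE.le]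
  · rintro (i | i) - (j | j) - hij
    · exact hdR (mem_univ i) (mem_univ j) (fun h => hij (by rw [h]))
    · simp only [Sum.elim_inl, Sum.elim_inr]
      rw [Set.disjoint_left]
      rintro ⟨x, y⟩ h1 h2
      simp only [Set.mem_prod, Set.mem_Ioo] at h1 h2
      have := (hbR i).2.2.2
      have := (hbS j).2.2.1
      linarith [h1.2.2, h2.2.1]
    · simp only [Sum.elim_inl, Sum.elim_inr]
      rw [Set.disjoint_left]
      rintro ⟨x, y⟩ h1 h2
      simp only [Set.mem_prod, Set.mem_Ioo] at h1 h2
      have := (hbR j).2.2.2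
      have := (hbS i).2.2.1
      linarith [h1.2.1, h2.2.2]
    · exact hdS (mem_univ i) (mem_univ j) (fun h => hij (by rw [h]))
  · rintro ⟨x, y⟩
    set I : Set (Fin m) := {i | ((x, y) : ℝ × ℝ) ∈ Rect (aR i) (bR i) (cR i) (dR i)} with hIdef
    set J : Set (Fin k) := {i | ((x, y) : ℝ × ℝ) ∈ Rect (aS i) (bS i) (cS i) (dS i)} with hJdef
    have hset : {k' : Fin m ⊕ Fin k | ((x, y) : ℝ × ℝ) ∈
        Rect (Sum.elim aR aS k') (Sum.elim bR bS k') (Sum.elim cR cS k') (Sum.elim dR dS k')}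
        = Sum.inl '' I ∪ Sum.inr '' J := by
      ext (i | i) <;> simp [hIdef, hJdef]
    rw [hset]
    have hle : (Sum.inl '' I ∪ Sum.inr '' J).ncard ≤ I.ncard + J.ncard := by
      refine (Set.ncard_union_le _ _).trans ?_
      rw [Set.ncard_image_of_injective _ Sum.inl_injective,
        Set.ncard_image_of_injective _ Sum.inr_injective]
    rcases lt_trichotomy y D with hy | hy | hy
    · have hJ0 : J = ∅ := by
        ext j
        simp only [hJdef, mem_setOf_eq, mem_empty_iff_false, iff_false]
        intro hj
        have h1 := (mem_Rect.mp hj).2.1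
        have h2 := (hbS j).2.2.1
        simp only at h1
        linarith
      have h3 := hcR (x, y)
      calc (Sum.inl '' I ∪ Sum.inr '' J).ncard ≤ I.ncard + J.ncard := hle
        _ ≤ 3 := by rw [hJ0, Set.ncard_empty]; simpa [hIdef] using h3
    · subst hy
      have hI2 : I.ncard ≤ 2 := by
        refine ncard_le_two_of_intervals aR bR x I (fun i _ => (hndR i).1)
          (fun i hi => (mem_Rect.mp hi).1) ?_
        intro i hi j hj hij
        have hdij := hdR (mem_univ i) (mem_univ j) hij
        have hdi : dR i = y := le_antisymm (hbR i).2.2.2 (mem_Rect.mp hi).2.2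
        have hdj : dR j = y := le_antisymm (hbR j).2.2.2 (mem_Rect.mp hj).2.2
        have h1 : cR i < y := hdi ▸ (hndR i).2
        have h2 : cR j < y := hdj ▸ (hndR j).2
        have hm1 : cR i ≤ max (cR i) (cR j) := le_max_left _ _
        have hm2 : cR j ≤ max (cR i) (cR j) := le_max_right _ _
        have hm : max (cR i) (cR j) < y := max_lt h1 h2
        rw [Set.disjoint_left]
        intro t ht1 ht2
        have hu1 : (max (cR i) (cR j) + y) / 2 ∈ Ioo (cR i) (dR i) := by
          rw [hdi]; exact ⟨by linarith, by linarith⟩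
        have hu2 : (max (cR i) (cR j) + y) / 2 ∈ Ioo (cR j) (dR j) := by
          rw [hdj]; exact ⟨by linarith, by linarith⟩
        exact Set.disjoint_left.mp hdij (Set.mk_mem_prod ht1 hu1) (Set.mk_mem_prod ht2 hu2)
      have hJ2 : J.ncard ≤ 2 := by
        refine ncard_le_two_of_intervals aS bS x J (fun i _ => (hndS i).1)
          (fun i hi => (mem_Rect.mp hi).1) ?_
        intro i hi j hj hij
        have hdij := hdS (mem_univ i) (mem_univ j) hij
        have hci : cS i = y := le_antisymm (mem_Rect.mp hi).2.1 (hbS i).2.2.1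
        have hcj : cS j = y := le_antisymm (mem_Rect.mp hj).2.1 (hbS j).2.2.1
        have h1 : y < dS i := hci ▸ (hndS i).2
        have h2 : y < dS j := hcj ▸ (hndS j).2
        have hm1 : min (dS i) (dS j) ≤ dS i := min_le_left _ _
        have hm2 : min (dS i) (dS j) ≤ dS j := min_le_right _ _
        have hm : y < min (dS i) (dS j) := lt_min h1 h2
        rw [Set.disjoint_left]
        intro t ht1 ht2
        have hu1 : (y + min (dS i) (dS j)) / 2 ∈ Ioo (cS i) (dS i) := by
          rw [hci]; exact ⟨by linarith, by linarith⟩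
        have hu2 : (y + min (dS i) (dS j)) / 2 ∈ Ioo (cS j) (dS j) := by
          rw [hcj]; exact ⟨by linarith, by linarith⟩
        exact Set.disjoint_left.mp hdij (Set.mk_mem_prod ht1 hu1) (Set.mk_mem_prod ht2 hu2)
      rcases Set.eq_empty_or_nonempty I with hI0 | ⟨i0, hi0⟩
      · have h3 := hcS (x, y)
        calc (Sum.inl '' I ∪ Sum.inr '' J).ncard ≤ I.ncard + J.ncard := hle
          _ ≤ 3 := by rw [hI0, Set.ncard_empty]; simpa [hJdef] using h3
      rcases Set.eq_empty_or_nonempty J with hJ0 | ⟨j0, hj0⟩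
      · have h3 := hcR (x, y)
        calc (Sum.inl '' I ∪ Sum.inr '' J).ncard ≤ I.ncard + J.ncard := hle
          _ ≤ 3 := by rw [hJ0, Set.ncard_empty]; simpa [hIdef] using h3
      have hxAB : A ≤ x ∧ x ≤ B := by
        have h := (mem_Rect.mp hi0).1
        exact ⟨le_trans (hbR i0).1 h.1, le_trans h.2 (hbR i0).2.1⟩
      have hseg' := hseg (x, y) (by
        rw [Set.mem_prod]
        exact ⟨Set.mem_Icc.mpr hxAB, rfl⟩)
      have hone : I.ncard ≤ 1 ∨ J.ncard ≤ 1 := by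
        by_contra hcon
        push_neg at hcon
        obtain ⟨hc1, hc2⟩ := hcon
        apply hseg'
        rw [Set.one_lt_ncard_iff I.toFinite] at hc1
        rw [Set.one_lt_ncard_iff J.toFinite] at hc2
        obtain ⟨i1, i2, hi1, hi2, hne⟩ := hc1
        obtain ⟨j1, j2, hj1, hj2, hne'⟩ := hc2
        exact ⟨⟨i1, i2, hne, hi1, hi2⟩, ⟨j1, j2, hne', hj1, hj2⟩⟩
      refine hle.trans ?_
      rcases hone with h | h <;> omega
    · have hI0 : I = ∅ := by
        ext i
        simp only [hIdef, mem_setOf_eq, mem_empty_iff_false, iff_false]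
        intro hi
        have h1 := (mem_Rect.mp hi).2.2
        have h2 := (hbR i).2.2.2
        simp only at h1
        linarith
      have h3 := hcS (x, y)
      calc (Sum.inl '' I ∪ Sum.inr '' J).ncard ≤ I.ncard + J.ncard := hle
        _ ≤ 3 := by rw [hI0, Set.ncard_empty]; simpa [hJdef] using h3
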